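/- Let I be an ideal of a commutative ring R. Then I is a nil clean ideal of R if and only if I ∩ J(R) is nil and a - a^2 ∈ I ∩ J(R) for every a ∈ I. -/

import Mathlib

def IsNilCleanIdeal {R : Type*} [CommRing R] (I : Ideal R) : Prop :=
  ∀ x ∈ I, ∃ e n : R, IsIdempotentElem e ∧ IsNilpotent n ∧ x = e + n

/-!
An idempotent `e` lying in `J(R)` is zero, since `1 - e` is a unit with `e * (1 - e) = 0`;
nilpotents lie in `J(R)`. Hence a nil clean element of `J(R)` is nilpotent. In a commutative ring,
`x` is nil clean iff `x - x ^ 2` is nilpotent: one direction is `(e + n) - (e + n) ^ 2 =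
n * (1 - 2 * e - n)`, the other lifts the idempotent `x` of `R ⧸ nilradical R` to `R`.
-/

section

variable {R : Type*} [CommRing R]

def IsNilClean (x : R) : Prop :=
  ∃ e n : R, IsIdempotentElem e ∧ IsNilpotent n ∧ x = e + n

theorem IsNilpotent.mem_jacobson_bot {x : R} (hx : IsNilpotent x) :
    x ∈ (⊥ : Ideal R).jacobson :=
  Ideal.radical_le_jacobson (mem_nilradical.mpr hx)

theorem IsIdempotentElem.eq_zero_of_mem_jacobson_bot {e : R} (he : IsIdempotentElem e)
    (hJ : e ∈ (⊥ : Ideal R).jacobson) : e = 0 := by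
  have hu : IsUnit (1 - e) := by
    simpa [sub_eq_add_neg, add_comm] using Ideal.mem_jacobson_bot.mp hJ (-1)
  exact hu.mul_left_eq_zero.mp he.mul_one_sub_self

theorem IsNilClean.isNilpotent_of_mem_jacobson_bot {x : R} (hx : IsNilClean x)
    (hJ : x ∈ (⊥ : Ideal R).jacobson) : IsNilpotent x := by
  obtain ⟨e, n, he, hn, rfl⟩ := hx
  have heJ : e ∈ (⊥ : Ideal R).jacobson := by
    simpa using sub_mem hJ hn.mem_jacobson_bot
  rwa [he.eq_zero_of_mem_jacobson_bot heJ, zero_add]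

theorem IsNilClean.isNilpotent_sub_sq {x : R} (hx : IsNilClean x) : IsNilpotent (x - x ^ 2) := by
  obtain ⟨e, n, he, hn, rfl⟩ := hx
  have hfactor : (e + n) - (e + n) ^ 2 = n * (1 - 2 * e - n) := by
    linear_combination -he.eq
  rw [hfactor]
  exact (Commute.all n _).isNilpotent_mul_right hn

theorem isNilClean_of_isNilpotent_sub_sq {x : R} (hx : IsNilpotent (x - x ^ 2)) :
    IsNilClean x := by
  let f := Ideal.Quotient.mk (nilradical R)
  have hker : ∀ y ∈ RingHom.ker f, IsNilpotent y := fun y hy =>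
    mem_nilradical.mp (Ideal.mk_ker (I := nilradical R) ▸ hy)
  have hfx : IsIdempotentElem (f x) := by
    have h0 : f (x - x ^ 2) = 0 := Ideal.Quotient.eq_zero_iff_mem.mpr (mem_nilradical.mpr hx)
    rw [map_sub, map_pow, sub_eq_zero, sq] at h0
    exact h0.symm
  obtain ⟨e, he, hfe⟩ := exists_isIdempotentElem_eq_of_ker_isNilpotent f hker (f x) ⟨x, rfl⟩ hfx
  exact ⟨e, x - e, he, hker _ (by rw [RingHom.mem_ker, map_sub, hfe, sub_self]), by ring⟩

theorem isNilClean_iff_isNilpotent_sub_sq {x : R} : IsNilClean x ↔ IsNilpotent (x - x ^ 2) :=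
  ⟨IsNilClean.isNilpotent_sub_sq, isNilClean_of_isNilpotent_sub_sq⟩

end

/-- An ideal `I` of a commutative ring is nil clean iff `I ∩ J(R)` is nil and
`I/(I ∩ J(R))` is Boolean. -/
theorem nilCleanIdeal_iff_inter_jacobson {R : Type*} [CommRing R] (I : Ideal R) :
    IsNilCleanIdeal I ↔
      (∀ x ∈ I ⊓ (⊥ : Ideal R).jacobson, IsNilpotent x) ∧
        ∀ a ∈ I, a - a ^ 2 ∈ I ⊓ (⊥ : Ideal R).jacobson := by
  constructor
  · intro hI
    refine ⟨fun x hx => IsNilClean.isNilpotent_of_mem_jacobson_bot (hI x hx.1) hx.2,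
      fun a ha => ⟨sub_mem ha (I.pow_mem_of_mem ha 2 two_pos), ?_⟩⟩
    exact (isNilClean_iff_isNilpotent_sub_sq.mp (hI a ha)).mem_jacobson_bot
  · rintro ⟨hnil, hsq⟩ x hx
    exact isNilClean_iff_isNilpotent_sub_sq.mpr (hnil _ (hsq x hx))
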